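/- Let A be a faithful Banach algebra such that the closed linear span of A·A is A. Then A_M is an ideal in its second dual (with the first Arens product) if and only if A is an ideal in its second dual. Equivalently, left and right multiplication operators by elements of A_M are weakly compact on A_M if and only if left and right multiplication operators by elements of A are weakly compact on A. -/

import Mathlib

/-!
Weakly compact operators between Banach spaces form a norm-closed two-sided operator ideal.
Closedness is Grothendieck's criterion: a bounded set that lies within `ε` of a relatively
weakly compact set for every `ε > 0` is relatively weakly compact; in the bidual its weak-star
closure stays within `ε` of the norm-closed copy of the space, hence inside it.

Since `‖i a‖ = mnorm a` and `A` is faithful, `i : A → A_M` is injective, and the module actions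
factor multiplication by a product through multiplication by one factor:
`L_{bc} = (x ↦ actr x b) ∘ L_{i c} ∘ i` on `A` and `L_{i(bc)} = i ∘ L_b ∘ (x ↦ actr x c)` on
`A_M` (similarly on the right with `act`). Products span a dense subspace of `A` and `i(A)` is
dense in `A_M`, so closedness of the ideal gives both directions.
-/

open scoped Topology
open Filter

noncomputable def mnorm {A : Type*} [NonUnitalNormedRing A] (a : A) : ℝ :=
  ⨆ b : {b : A // ‖b‖ ≤ 1}, max ‖a * b.1‖ ‖b.1 * a‖

/-- A bounded operator is weakly compact: it maps bounded sets to relatively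
weakly compact sets. -/
def WkCompact {X : Type*} [NormedAddCommGroup X] [NormedSpace ℂ X]
    (T : X →L[ℂ] X) : Prop :=
  ∀ s : Set X, Bornology.IsBounded s →
    IsCompact (closure (T '' s : Set (WeakSpace ℂ X)))

open scoped Pointwise
open Bornology Metric

section WeaklyCompact

variable {𝕜 X Y Z : Type*} [RCLike 𝕜] [NormedAddCommGroup X] [NormedSpace 𝕜 X]
  [NormedAddCommGroup Y] [NormedSpace 𝕜 Y] [NormedAddCommGroup Z] [NormedSpace 𝕜 Z]

open NormedSpace in
theorem WeakSpace.isCompact_closure_of_subset_add_closedBall [CompleteSpace X]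
    {D : Set (WeakSpace 𝕜 X)} (hD : IsBounded (toWeakSpace 𝕜 X ⁻¹' D))
    (h : ∀ ε > 0, ∃ K : Set (WeakSpace 𝕜 X), IsCompact (closure K) ∧
      D ⊆ K + toWeakSpace 𝕜 X '' closedBall 0 ε) :
    IsCompact (closure D) := by
  refine isCompact_closure_of_isBounded 𝕜 X D hD fun z hz => ?_
  have hrange : IsClosed (Set.range (inclusionInDoubleDualLi 𝕜 (E := X))) :=
    (inclusionInDoubleDualLi 𝕜).isometry.isUniformInducing.isComplete_range.isClosed
  suffices WeakDual.toStrongDual z ∈ closure (Set.range (inclusionInDoubleDualLi 𝕜 (E := X))) by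
    obtain ⟨x, hx⟩ := hrange.closure_eq ▸ this
    exact ⟨toWeakSpace 𝕜 X x, WeakDual.toStrongDual.injective hx⟩
  refine (Metric.mem_closure_iff (α := StrongDual 𝕜 (StrongDual 𝕜 X))).2 fun ε hε => ?_
  obtain ⟨K, hK, hDK⟩ := h (ε / 2) (half_pos hε)
  have hC : IsClosed (inclusionInDoubleDualWeak 𝕜 X '' closure K +
      WeakDual.toStrongDual ⁻¹' closedBall 0 (ε / 2)) :=
    (WeakDual.isClosed_closedBall 0 _).add_left_of_isCompact
      (hK.image (inclusionInDoubleDualWeak 𝕜 X).continuous)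
  have hJD : inclusionInDoubleDualWeak 𝕜 X '' D ⊆ inclusionInDoubleDualWeak 𝕜 X '' closure K +
      WeakDual.toStrongDual ⁻¹' closedBall 0 (ε / 2) := by
    rintro - ⟨d, hd, rfl⟩
    obtain ⟨k, hk, -, ⟨x, hx, rfl⟩, rfl⟩ := hDK hd
    refine ⟨_, ⟨k, subset_closure hk, rfl⟩, inclusionInDoubleDualWeak 𝕜 X (toWeakSpace 𝕜 X x), ?_,
      (map_add _ _ _).symm⟩
    exact (mem_closedBall_zero_iff (E := StrongDual 𝕜 (StrongDual 𝕜 X))).2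
      (((inclusionInDoubleDualLi 𝕜).norm_map x).trans_le (mem_closedBall_zero_iff.1 hx))
  obtain ⟨-, ⟨k, -, rfl⟩, w, hw, rfl⟩ := closure_minimal hJD hC hz
  refine ⟨inclusionInDoubleDualLi 𝕜 ((toWeakSpace 𝕜 X).symm k), ⟨_, rfl⟩, ?_⟩
  exact (dist_self_add_left (E := StrongDual 𝕜 (StrongDual 𝕜 X)) _ _).trans_lt <|
    ((mem_closedBall_zero_iff (E := StrongDual 𝕜 (StrongDual 𝕜 X))).1 hw).trans_lt
    (half_lt_self hε)

def IsWeaklyCompactOperator (T : X →L[𝕜] Y) : Prop :=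
  ∀ s : Set X, IsBounded s → IsCompact (closure (T '' s : Set (WeakSpace 𝕜 Y)))

variable (𝕜 X Y) in
def weaklyCompactOperator : Submodule 𝕜 (X →L[𝕜] Y) where
  carrier := {T | IsWeaklyCompactOperator T}
  zero_mem' _ _ := isCompact_singleton.closure_of_subset <| by
    rintro - ⟨x, -, rfl⟩
    exact (map_zero (toWeakSpace 𝕜 Y)).symm
  add_mem' {T S} hT hS s hs := ((hT s hs).add (hS s hs)).closure_of_subset <| by
    rintro - ⟨x, hx, rfl⟩
    exact ⟨T x, subset_closure ⟨x, hx, rfl⟩, S x, subset_closure ⟨x, hx, rfl⟩, rfl⟩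
  smul_mem' c T hT s hs := ((hT s hs).image (continuous_const_smul c)).closure_of_subset <| by
    rintro - ⟨x, hx, rfl⟩
    exact ⟨T x, subset_closure ⟨x, hx, rfl⟩, rfl⟩

theorem IsWeaklyCompactOperator.comp_clm {T : X →L[𝕜] Y} (hT : IsWeaklyCompactOperator T)
    (U : Z →L[𝕜] X) : IsWeaklyCompactOperator (T.comp U) := fun s hs => by
  convert hT _ (U.lipschitz.isBounded_image hs) using 2
  exact Set.image_comp T U s

theorem IsWeaklyCompactOperator.clm_comp {T : X →L[𝕜] Y} (hT : IsWeaklyCompactOperator T)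
    (V : Y →L[𝕜] Z) : IsWeaklyCompactOperator (V.comp T) := fun s hs =>
  ((hT s hs).image (WeakSpace.map V).continuous).closure_of_subset <| by
    rintro - ⟨x, hx, rfl⟩
    exact ⟨T x, subset_closure ⟨x, hx, rfl⟩, rfl⟩

theorem isClosed_setOf_isWeaklyCompactOperator [CompleteSpace Y] :
    IsClosed {T : X →L[𝕜] Y | IsWeaklyCompactOperator T} := by
  refine isClosed_of_closure_subset fun T hT s hs => ?_
  obtain ⟨R, hR, hsR⟩ := hs.exists_pos_norm_le
  refine WeakSpace.isCompact_closure_of_subset_add_closedBall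
    (T.lipschitz.isBounded_image hs) fun ε hε => ?_
  obtain ⟨S, hS, hTS⟩ := Metric.mem_closure_iff.1 hT (ε / R) (div_pos hε hR)
  refine ⟨S '' s, hS s hs, ?_⟩
  rintro - ⟨x, hx, rfl⟩
  refine ⟨S x, ⟨x, hx, rfl⟩, toWeakSpace 𝕜 Y (T x - S x), ⟨T x - S x, ?_, rfl⟩,
    add_sub_cancel _ _⟩
  rw [mem_closedBall_zero_iff]
  calc ‖T x - S x‖ = ‖(T - S) x‖ := rfl
    _ ≤ ‖T - S‖ * ‖x‖ := (T - S).le_opNorm x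
    _ ≤ ε / R * R := by
      gcongr
      · exact (dist_eq_norm T S ▸ hTS).le
      · exact hsR x hx
    _ = ε := div_mul_cancel₀ ε hR.ne'

end WeaklyCompact

theorem Submodule.eq_top_of_isClosed_of_subset {𝕜 A : Type*} [Semiring 𝕜] [AddCommMonoid A]
    [Module 𝕜 A] [TopologicalSpace A] [ContinuousAdd A] [ContinuousConstSMul 𝕜 A]
    {p : Submodule 𝕜 A} (hp : IsClosed (p : Set A)) {s : Set A}
    (hs : (span 𝕜 s).topologicalClosure = ⊤) (h : s ⊆ p) : p = ⊤ :=
  top_le_iff.1 (hs ▸ (span 𝕜 s).topologicalClosure_minimal (span_le.2 h) hp)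

section Mnorm

variable {A : Type*} [NonUnitalNormedRing A]

theorem norm_mul_le_mnorm (a : A) {u : A} (hu : ‖u‖ ≤ 1) : ‖a * u‖ ≤ mnorm a := by
  refine (le_max_left _ ‖u * a‖).trans (le_ciSup (f := fun b : {b : A // ‖b‖ ≤ 1} =>
    max ‖a * b.1‖ ‖b.1 * a‖) ⟨‖a‖, ?_⟩ ⟨u, hu⟩)
  rintro - ⟨⟨b, hb⟩, rfl⟩
  exact max_le ((norm_mul_le_of_le le_rfl hb).trans_eq (mul_one _))
    ((norm_mul_le_of_le hb le_rfl).trans_eq (one_mul _))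

theorem injective_of_norm_eq_mnorm {𝕜 : Type*} [RCLike 𝕜] [NormedSpace 𝕜 A]
    [SMulCommClass 𝕜 A A] (hA : ∀ a : A, a ≠ 0 → ∃ b, a * b ≠ 0) {F : Type*}
    [NormedAddCommGroup F] [NormedSpace 𝕜 F] (i : A →L[𝕜] F) (hi : ∀ a, ‖i a‖ = mnorm a) :
    Function.Injective i := by
  refine (injective_iff_map_eq_zero i).2 fun a ha => by_contra fun ha0 => ?_
  obtain ⟨b, hab⟩ := hA a ha0
  have hb : b ≠ 0 := by
    rintro rfl
    exact hab (mul_zero a)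
  have := hi a ▸ norm_mul_le_mnorm a (norm_smul_inv_norm (𝕜 := 𝕜) hb).le
  rw [ha, norm_zero, norm_le_zero_iff, mul_smul_comm, smul_eq_zero] at this
  exact hab (by simpa [hb] using this)

end Mnorm

section Multipliers

variable {𝕜 A B : Type*} [RCLike 𝕜]
  [NonUnitalNormedRing A] [NormedSpace 𝕜 A] [IsScalarTower 𝕜 A A] [SMulCommClass 𝕜 A A]
  [NonUnitalNormedRing B] [NormedSpace 𝕜 B] [IsScalarTower 𝕜 B B] [SMulCommClass 𝕜 B B]

variable (𝕜 A) in
noncomputable def weaklyCompactMultipliers : Submodule 𝕜 A :=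
  (weaklyCompactOperator 𝕜 A A).comap (ContinuousLinearMap.mul 𝕜 A : A →ₗ[𝕜] A →L[𝕜] A) ⊓
    (weaklyCompactOperator 𝕜 A A).comap ((ContinuousLinearMap.mul 𝕜 A).flip : A →ₗ[𝕜] A →L[𝕜] A)

theorem mem_weaklyCompactMultipliers {a : A} :
    a ∈ weaklyCompactMultipliers 𝕜 A ↔ IsWeaklyCompactOperator (ContinuousLinearMap.mul 𝕜 A a) ∧
      IsWeaklyCompactOperator ((ContinuousLinearMap.mul 𝕜 A).flip a) :=
  Iff.rfl

theorem isClosed_weaklyCompactMultipliers [CompleteSpace A] :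
    IsClosed (weaklyCompactMultipliers 𝕜 A : Set A) :=
  (isClosed_setOf_isWeaklyCompactOperator.preimage (ContinuousLinearMap.mul 𝕜 A).continuous).inter
    (isClosed_setOf_isWeaklyCompactOperator.preimage (ContinuousLinearMap.mul 𝕜 A).flip.continuous)

variable {i : A →L[𝕜] B} {act actr : B →L[𝕜] A →L[𝕜] A}

theorem mul_mem_weaklyCompactMultipliers_of_map (himul : ∀ a b : A, i (a * b) = i a * i b)
    (hinj : Function.Injective i)
    (hact : ∀ (x : B) (b : A), i (act x b) = x * i b)
    (hactr : ∀ (x : B) (b : A), i (actr x b) = i b * x) {b c : A}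
    (hb : i b ∈ weaklyCompactMultipliers 𝕜 B) (hc : i c ∈ weaklyCompactMultipliers 𝕜 B) :
    b * c ∈ weaklyCompactMultipliers 𝕜 A := by
  have hL : ContinuousLinearMap.mul 𝕜 A (b * c) =
      (actr.flip b).comp ((ContinuousLinearMap.mul 𝕜 B (i c)).comp i) := by
    ext s
    apply hinj
    simp [himul, hactr, mul_assoc]
  have hR : (ContinuousLinearMap.mul 𝕜 A).flip (b * c) =
      (act.flip c).comp (((ContinuousLinearMap.mul 𝕜 B).flip (i b)).comp i) := by
    ext s
    apply hinj
    simp [himul, hact, mul_assoc]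
  refine mem_weaklyCompactMultipliers.2 ⟨?_, ?_⟩
  · rw [hL]
    exact ((mem_weaklyCompactMultipliers.1 hc).1.comp_clm i).clm_comp _
  · rw [hR]
    exact ((mem_weaklyCompactMultipliers.1 hb).2.comp_clm i).clm_comp _

theorem map_mul_mem_weaklyCompactMultipliers (himul : ∀ a b : A, i (a * b) = i a * i b)
    (hact : ∀ (x : B) (b : A), i (act x b) = x * i b)
    (hactr : ∀ (x : B) (b : A), i (actr x b) = i b * x) {b c : A}
    (hb : b ∈ weaklyCompactMultipliers 𝕜 A) (hc : c ∈ weaklyCompactMultipliers 𝕜 A) :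
    i (b * c) ∈ weaklyCompactMultipliers 𝕜 B := by
  have hL : ContinuousLinearMap.mul 𝕜 B (i (b * c)) =
      i.comp ((ContinuousLinearMap.mul 𝕜 A b).comp (actr.flip c)) := by
    ext y
    simp [himul, hactr, mul_assoc]
  have hR : (ContinuousLinearMap.mul 𝕜 B).flip (i (b * c)) =
      i.comp (((ContinuousLinearMap.mul 𝕜 A).flip c).comp (act.flip b)) := by
    ext y
    simp [himul, hact, mul_assoc]
  refine mem_weaklyCompactMultipliers.2 ⟨?_, ?_⟩
  · rw [hL]
    exact ((mem_weaklyCompactMultipliers.1 hb).1.comp_clm _).clm_comp i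
  · rw [hR]
    exact ((mem_weaklyCompactMultipliers.1 hc).2.comp_clm _).clm_comp i

end Multipliers

theorem stmt12 {A B : Type*} [NonUnitalNormedRing A] [NormedSpace ℂ A]
    [IsScalarTower ℂ A A] [SMulCommClass ℂ A A] [CompleteSpace A]
    [NonUnitalNormedRing B] [NormedSpace ℂ B]
    [IsScalarTower ℂ B B] [SMulCommClass ℂ B B] [CompleteSpace B]
    (hfaith : ∀ a : A, a ≠ 0 → ∃ b c : A, a * b ≠ 0 ∧ c * a ≠ 0)
    (hAA : (Submodule.span ℂ {x : A | ∃ a b : A, x = a * b}).topologicalClosure = ⊤)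
    (i : A →L[ℂ] B) (himul : ∀ a b : A, i (a * b) = i a * i b)
    (hinorm : ∀ a : A, ‖i a‖ = mnorm a) (hdense : DenseRange i)
    (act : B →L[ℂ] A →L[ℂ] A) (hact : ∀ (x : B) (b : A), i (act x b) = x * i b)
    (actr : B →L[ℂ] A →L[ℂ] A) (hactr : ∀ (x : B) (b : A), i (actr x b) = i b * x) :
    (∀ x : B, WkCompact (ContinuousLinearMap.mul ℂ B x) ∧
        WkCompact ((ContinuousLinearMap.mul ℂ B).flip x)) ↔
    (∀ a : A, WkCompact (ContinuousLinearMap.mul ℂ A a) ∧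
        WkCompact ((ContinuousLinearMap.mul ℂ A).flip a)) := by
  change (∀ x, x ∈ weaklyCompactMultipliers ℂ B) ↔ ∀ a, a ∈ weaklyCompactMultipliers ℂ A
  have hinj : Function.Injective i := injective_of_norm_eq_mnorm
    (fun a ha => (hfaith a ha).imp fun _ ⟨_, hb, _⟩ => hb) i hinorm
  constructor
  · intro hB
    refine Submodule.eq_top_iff'.1 <| Submodule.eq_top_of_isClosed_of_subset
      isClosed_weaklyCompactMultipliers hAA ?_
    rintro - ⟨b, c, rfl⟩
    exact mul_mem_weaklyCompactMultipliers_of_map himul hinj hact hactr (hB _) (hB _)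
  · intro hA x
    have hclosed : IsClosed ((weaklyCompactMultipliers ℂ B).comap (i : A →ₗ[ℂ] B) : Set A) := by
      rw [Submodule.comap_coe]
      exact isClosed_weaklyCompactMultipliers.preimage i.continuous
    have hi : (weaklyCompactMultipliers ℂ B).comap (i : A →ₗ[ℂ] B) = ⊤ :=
      Submodule.eq_top_of_isClosed_of_subset hclosed hAA <| by
        rintro - ⟨b, c, rfl⟩
        exact map_mul_mem_weaklyCompactMultipliers himul hact hactr (hA _) (hA _)
    exact hdense.induction_on x isClosed_weaklyCompactMultipliers fun a =>
      Submodule.eq_top_iff'.1 hi a
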